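/- arXiv:1707.05475 — 2 statements merged into one kernel-verified Lean document; each statement's English description precedes it below -/
import Mathlib

section
/- If the set {A_{i,j} : i,j ∈ H} is irreducible and aperiodic, then the set Γ̄ = {(s1,s2) ∈ ℝ² : spr(C(e^{s1}, e^{s2})) ≤ 1} is a bounded subset of ℝ². -/
namespace QBD

/-- The index set `H = {-1, 0, 1}`. -/
def Hs : Finset ℤ := {-1, 0, 1}

/-- A nonnegative matrix with unit row sums. -/
def IsStochastic {n : ℕ} (M : Matrix (Fin n) (Fin n) ℝ) : Prop :=
  (∀ i j, 0 ≤ M i j) ∧ ∀ i, ∑ j, M i j = 1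

/-- `μ` is an eigenvalue of the complex matrix `M`. -/
def IsEigC {n : ℕ} (M : Matrix (Fin n) (Fin n) ℂ) (μ : ℂ) : Prop :=
  ∃ v : Fin n → ℂ, v ≠ 0 ∧ M.mulVec v = μ • v

/-- Spectral radius of a complex matrix. -/
noncomputable def spr {n : ℕ} (M : Matrix (Fin n) (Fin n) ℂ) : ℝ :=
  sSup {r : ℝ | ∃ μ : ℂ, IsEigC M μ ∧ r = ‖μ‖}

/-- Spectral radius of a real matrix. -/
noncomputable def sprR {n : ℕ} (M : Matrix (Fin n) (Fin n) ℝ) : ℝ :=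
  spr (M.map Complex.ofReal)

open Classical in
/-- `n`-step transition probabilities of a Markov kernel on a countable state space. -/
noncomputable def stepN {S : Type*} (P : S → S → ℝ) : ℕ → S → S → ℝ
  | 0, s, t => if s = t then 1 else 0
  | n + 1, s, t => ∑' u, stepN P n s u * P u t

/-- Irreducibility of a Markov kernel. -/
def ChainIrreducible {S : Type*} (P : S → S → ℝ) : Prop :=
  ∀ s t : S, ∃ n : ℕ, 1 ≤ n ∧ 0 < stepN P n s t

/-- Aperiodicity of a Markov kernel: for every state, the gcd of return times is one. -/
def ChainAperiodic {S : Type*} (P : S → S → ℝ) : Prop :=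
  ∀ s : S, ∀ d : ℕ, (∀ n : ℕ, 1 ≤ n → 0 < stepN P n s s → d ∣ n) → d = 1

/-- Kernel of the chain on `ℤ² × S0` governed everywhere by `{A_{k,l}}`. -/
def fullKernel (s0 : ℕ) (A : ℤ → ℤ → Matrix (Fin s0) (Fin s0) ℝ) :
    (ℤ × ℤ × Fin s0) → (ℤ × ℤ × Fin s0) → ℝ := fun x y =>
  A (y.1 - x.1) (y.2.1 - x.2.1) x.2.2 y.2.2

/-- `C(z,w) = Σ_{i,j∈H} A_{i,j} z^i w^j` (real arguments). -/
noncomputable def CmatR (s0 : ℕ) (A : ℤ → ℤ → Matrix (Fin s0) (Fin s0) ℝ) (z w : ℝ) :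
    Matrix (Fin s0) (Fin s0) ℝ :=
  ∑ i ∈ Hs, ∑ j ∈ Hs, (z ^ i * w ^ j) • A i j

/-- `C(z,w) = Σ_{i,j∈H} A_{i,j} z^i w^j` (complex arguments). -/
noncomputable def CmatC (s0 : ℕ) (A : ℤ → ℤ → Matrix (Fin s0) (Fin s0) ℝ) (z w : ℂ) :
    Matrix (Fin s0) (Fin s0) ℂ :=
  ∑ i ∈ Hs, ∑ j ∈ Hs, (z ^ i * w ^ j) • (A i j).map Complex.ofReal

/-- `χ(z,w) = spr(C(z,w))`. -/
noncomputable def chi (s0 : ℕ) (A : ℤ → ℤ → Matrix (Fin s0) (Fin s0) ℝ) (z w : ℝ) : ℝ :=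
  sprR (CmatR s0 A z w)

/-- `Γ̄ = {(s1,s2) : χ(e^{s1}, e^{s2}) ≤ 1}`. -/
def GammaBar (s0 : ℕ) (A : ℤ → ℤ → Matrix (Fin s0) (Fin s0) ℝ) : Set (ℝ × ℝ) :=
  {p | chi s0 A (Real.exp p.1) (Real.exp p.2) ≤ 1}

end QBD

/-! For `(s₁, s₂) ∈ Γ̄` put `z = e^{s₁}`, `w = e^{s₂}`. Weighting a step of displacement `(a, b)` by
`z^a w^b` turns the kernel into `C(z, w)`, so
`z^{d₁} w^{d₂} P^m((0,0,k), (d₁,d₂,k)) ≤ (C(z,w)^m)_{kk} ≤ tr C(z,w)^m ≤ s₀ · χ(z,w)^m ≤ s₀`,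
the trace bound because `tr C^m` is the sum of the `m`-th powers of the eigenvalues of `C`.
By irreducibility the chain goes from `(0,0,k)` to `(±1,0,k)` and to `(0,±1,k)` with positive
probability, which bounds `±s₁` and `±s₂` on `Γ̄`. -/

namespace QBD

section Spectrum

variable {n : ℕ}

lemma isEigC_iff_mem_spectrum (M : Matrix (Fin n) (Fin n) ℂ) (μ : ℂ) :
    IsEigC M μ ↔ μ ∈ spectrum ℂ M := by
  rw [spectrum.mem_iff, Matrix.isUnit_iff_isUnit_det, isUnit_iff_ne_zero, not_not,
    ← Matrix.exists_mulVec_eq_zero_iff]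
  simp [IsEigC, Matrix.sub_mulVec, sub_eq_zero, Algebra.algebraMap_eq_smul_one, Matrix.smul_mulVec,
    eq_comm]

lemma norm_le_spr {M : Matrix (Fin n) (Fin n) ℂ} {μ : ℂ} (hμ : μ ∈ spectrum ℂ M) :
    ‖μ‖ ≤ spr M := by
  have hset : {r : ℝ | ∃ μ : ℂ, IsEigC M μ ∧ r = ‖μ‖} = norm '' spectrum ℂ M := by
    ext r
    simp [isEigC_iff_mem_spectrum, eq_comm]
  rw [spr, hset]
  exact le_csSup (M.finite_spectrum.image _).bddAbove (Set.mem_image_of_mem _ hμ)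

lemma spr_nonneg (M : Matrix (Fin n) (Fin n) ℂ) : 0 ≤ spr M :=
  Real.sSup_nonneg fun _ ⟨μ, _, hr⟩ => hr ▸ norm_nonneg μ

lemma norm_trace_pow_le (M : Matrix (Fin n) (Fin n) ℂ) (m : ℕ) :
    ‖(M ^ m).trace‖ ≤ n * spr M ^ m := by
  rcases m.eq_zero_or_pos with rfl | hm
  · simp
  have hroot : ∀ r ∈ (M ^ m).charpoly.roots.map norm, r ≤ spr M ^ m := by
    intro r hr
    obtain ⟨ν, hν, rfl⟩ := Multiset.mem_map.mp hr
    have hspec : ν ∈ spectrum ℂ (M ^ m) :=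
      Matrix.mem_spectrum_of_isRoot_charpoly (Polynomial.isRoot_of_mem_roots hν)
    rw [spectrum.map_pow_of_pos M hm] at hspec
    obtain ⟨μ, hμ, rfl⟩ := hspec
    rw [norm_pow]
    exact pow_le_pow_left₀ (norm_nonneg μ) (norm_le_spr hμ) m
  calc ‖(M ^ m).trace‖ = ‖(M ^ m).charpoly.roots.sum‖ := by
        rw [Matrix.trace_eq_sum_roots_charpoly]
    _ ≤ ((M ^ m).charpoly.roots.map norm).sum := norm_multiset_sum_le _
    _ ≤ ((M ^ m).charpoly.roots.map norm).card • spr M ^ m :=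
        Multiset.sum_le_card_nsmul _ _ hroot
    _ = n * spr M ^ m := by
        rw [Multiset.card_map, IsAlgClosed.card_roots_eq_natDegree,
          Matrix.charpoly_natDegree_eq_dim, Fintype.card_fin, nsmul_eq_mul]

lemma abs_trace_pow_le (M : Matrix (Fin n) (Fin n) ℝ) (m : ℕ) :
    |(M ^ m).trace| ≤ n * sprR M ^ m := by
  have h := norm_trace_pow_le (M.map Complex.ofRealHom) m
  rwa [← Matrix.map_pow, ← AddMonoidHom.map_trace, Complex.ofRealHom_eq_coe, Complex.norm_real,
    Real.norm_eq_abs] at h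

end Spectrum

section Chain

variable {s0 : ℕ} {A : ℤ → ℤ → Matrix (Fin s0) (Fin s0) ℝ}

lemma CmatR_apply (z w : ℝ) (k l : Fin s0) :
    CmatR s0 A z w k l = ∑ i ∈ Hs, ∑ j ∈ Hs, z ^ i * w ^ j * A i j k l := by
  simp [CmatR, Matrix.sum_apply]

lemma CmatR_nonneg (hAnn : ∀ i j : ℤ, ∀ k l, 0 ≤ A i j k l) {z w : ℝ} (hz : 0 < z) (hw : 0 < w)
    (k l : Fin s0) : 0 ≤ CmatR s0 A z w k l := by
  rw [CmatR_apply]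
  exact Finset.sum_nonneg fun i _ => Finset.sum_nonneg fun j _ =>
    mul_nonneg (mul_nonneg (zpow_pos hz i).le (zpow_pos hw j).le) (hAnn i j k l)

lemma stepN_fullKernel_succ (hAsupp : ∀ i j : ℤ, ¬(i ∈ Hs ∧ j ∈ Hs) → A i j = 0) (n : ℕ)
    (x y : ℤ × ℤ × Fin s0) :
    stepN (fullKernel s0 A) (n + 1) x y =
      ∑ i ∈ Hs, ∑ j ∈ Hs, ∑ k, stepN (fullKernel s0 A) n x (y.1 - i, y.2.1 - j, k) * A i j k y.2.2 := by
  let e : ℤ × ℤ × Fin s0 ≃ ℤ × ℤ × Fin s0 :=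
    { toFun := fun p => (y.1 - p.1, y.2.1 - p.2.1, p.2.2)
      invFun := fun p => (y.1 - p.1, y.2.1 - p.2.1, p.2.2)
      left_inv := fun p => by simp
      right_inv := fun p => by simp }
  rw [stepN, ← e.tsum_eq, tsum_eq_sum (s := Hs ×ˢ Hs ×ˢ Finset.univ)]
  · simp [e, fullKernel, Finset.sum_product]
  · rintro ⟨i, j, k⟩ hijk
    simp only [Finset.mem_product, Finset.mem_univ, and_true] at hijk
    simp [e, fullKernel, hAsupp i j hijk]

lemma weighted_stepN_le_CmatR_pow (hAsupp : ∀ i j : ℤ, ¬(i ∈ Hs ∧ j ∈ Hs) → A i j = 0)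
    (hAnn : ∀ i j : ℤ, ∀ k l, 0 ≤ A i j k l) {z w : ℝ} (hz : 0 < z) (hw : 0 < w) (n : ℕ)
    (x y : ℤ × ℤ × Fin s0) :
    z ^ (y.1 - x.1) * w ^ (y.2.1 - x.2.1) * stepN (fullKernel s0 A) n x y
      ≤ (CmatR s0 A z w ^ n) x.2.2 y.2.2 := by
  induction n generalizing y with
  | zero =>
    by_cases h : x = y
    · subst h
      simp [stepN]
    · simpa [stepN, h] using Matrix.pow_apply_nonneg (CmatR_nonneg hAnn hz hw) 0 x.2.2 y.2.2
  | succ n ih =>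
    have hterm : ∀ i j k, z ^ (y.1 - x.1) * w ^ (y.2.1 - x.2.1) *
          (stepN (fullKernel s0 A) n x (y.1 - i, y.2.1 - j, k) * A i j k y.2.2)
        ≤ (CmatR s0 A z w ^ n) x.2.2 k * (z ^ i * w ^ j * A i j k y.2.2) := fun i j k =>
      calc _ = z ^ (y.1 - i - x.1) * w ^ (y.2.1 - j - x.2.1) *
                stepN (fullKernel s0 A) n x (y.1 - i, y.2.1 - j, k) *
              (z ^ i * w ^ j * A i j k y.2.2) := by
            rw [show y.1 - x.1 = y.1 - i - x.1 + i by ring,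
              show y.2.1 - x.2.1 = y.2.1 - j - x.2.1 + j by ring, zpow_add₀ hz.ne', zpow_add₀ hw.ne']
            ring
        _ ≤ _ := by
            gcongr
            · exact mul_nonneg (mul_nonneg (zpow_pos hz i).le (zpow_pos hw j).le) (hAnn i j k y.2.2)
            · exact ih (y.1 - i, y.2.1 - j, k)
    rw [stepN_fullKernel_succ hAsupp, pow_succ, Matrix.mul_apply]
    simp_rw [CmatR_apply, Finset.mul_sum]
    refine le_of_le_of_eq (Finset.sum_le_sum fun i _ => Finset.sum_le_sum fun j _ =>
      Finset.sum_le_sum fun k _ => hterm i j k) ?_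
    exact (Finset.sum_congr rfl fun _ _ => Finset.sum_comm).trans Finset.sum_comm

lemma weighted_stepN_le_of_mem_GammaBar (hAsupp : ∀ i j : ℤ, ¬(i ∈ Hs ∧ j ∈ Hs) → A i j = 0)
    (hAnn : ∀ i j : ℤ, ∀ k l, 0 ≤ A i j k l) {p : ℝ × ℝ} (hp : p ∈ GammaBar s0 A) (m : ℕ)
    (k : Fin s0) (d₁ d₂ : ℤ) :
    Real.exp p.1 ^ d₁ * Real.exp p.2 ^ d₂ * stepN (fullKernel s0 A) m (0, 0, k) (d₁, d₂, k) ≤ s0 := by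
  set C := CmatR s0 A (Real.exp p.1) (Real.exp p.2)
  have hC : ∀ k l, 0 ≤ C k l := CmatR_nonneg hAnn (Real.exp_pos _) (Real.exp_pos _)
  have hweight := weighted_stepN_le_CmatR_pow hAsupp hAnn (Real.exp_pos p.1) (Real.exp_pos p.2) m
    (0, 0, k) (d₁, d₂, k)
  simp only [sub_zero] at hweight
  calc _ ≤ (C ^ m) k k := hweight
    _ ≤ (C ^ m).trace :=
        Finset.single_le_sum (fun l _ => Matrix.pow_apply_nonneg hC m l l) (Finset.mem_univ k)
    _ ≤ |(C ^ m).trace| := le_abs_self _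
    _ ≤ s0 * sprR C ^ m := abs_trace_pow_le C m
    _ ≤ s0 := mul_le_of_le_one_right (Nat.cast_nonneg _)
        (pow_le_one₀ (spr_nonneg _) hp)

lemma exp_zpow (x : ℝ) (d : ℤ) : Real.exp x ^ d = Real.exp (d * x) := by
  rw [← Real.rpow_intCast, ← Real.exp_mul, mul_comm]

lemma exists_bound_on_GammaBar (hs0 : 1 ≤ s0)
    (hAsupp : ∀ i j : ℤ, ¬(i ∈ Hs ∧ j ∈ Hs) → A i j = 0) (hAnn : ∀ i j : ℤ, ∀ k l, 0 ≤ A i j k l)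
    (hirr : ChainIrreducible (fullKernel s0 A)) (d₁ d₂ : ℤ) :
    ∃ c, ∀ p ∈ GammaBar s0 A, d₁ * p.1 + d₂ * p.2 ≤ c := by
  obtain ⟨m, -, hq⟩ := hirr (0, 0, ⟨0, hs0⟩) (d₁, d₂, ⟨0, hs0⟩)
  refine ⟨Real.log (s0 / stepN (fullKernel s0 A) m (0, 0, ⟨0, hs0⟩) (d₁, d₂, ⟨0, hs0⟩)),
    fun p hp => ?_⟩
  rw [Real.le_log_iff_exp_le (div_pos (by exact_mod_cast hs0) hq), le_div_iff₀ hq, Real.exp_add,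
    ← exp_zpow, ← exp_zpow]
  exact weighted_stepN_le_of_mem_GammaBar hAsupp hAnn hp m _ d₁ d₂

end Chain

end QBD

open QBD in
theorem statement3_general
    (s0 : ℕ) (hs0 : 1 ≤ s0)
    (A : ℤ → ℤ → Matrix (Fin s0) (Fin s0) ℝ)
    (hAsupp : ∀ i j : ℤ, ¬(i ∈ Hs ∧ j ∈ Hs) → A i j = 0)
    (hAnn : ∀ i j : ℤ, ∀ k l, 0 ≤ A i j k l)
    (hfull_i : ChainIrreducible (fullKernel s0 A)) :
    Bornology.IsBounded (GammaBar s0 A) := by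
  obtain ⟨u₁, hu₁⟩ := exists_bound_on_GammaBar hs0 hAsupp hAnn hfull_i 1 0
  obtain ⟨l₁, hl₁⟩ := exists_bound_on_GammaBar hs0 hAsupp hAnn hfull_i (-1) 0
  obtain ⟨u₂, hu₂⟩ := exists_bound_on_GammaBar hs0 hAsupp hAnn hfull_i 0 1
  obtain ⟨l₂, hl₂⟩ := exists_bound_on_GammaBar hs0 hAsupp hAnn hfull_i 0 (-1)
  refine ((Metric.isBounded_Icc (-l₁) u₁).prod (Metric.isBounded_Icc (-l₂) u₂)).subset
    fun p hp => ?_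
  have h₁ := hu₁ p hp
  have h₂ := hl₁ p hp
  have h₃ := hu₂ p hp
  have h₄ := hl₂ p hp
  push_cast at h₁ h₂ h₃ h₄
  exact ⟨⟨by linarith, by linarith⟩, by linarith, by linarith⟩

open QBD in
/-- if `{A_{i,j}}` is irreducible and aperiodic, then `Γ̄` is bounded. -/
theorem statement3
    (s0 : ℕ) (hs0 : 1 ≤ s0)
    (A : ℤ → ℤ → Matrix (Fin s0) (Fin s0) ℝ)
    (hAsupp : ∀ i j : ℤ, ¬(i ∈ Hs ∧ j ∈ Hs) → A i j = 0)
    (hAnn : ∀ i j : ℤ, ∀ k l, 0 ≤ A i j k l)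
    (hAst : IsStochastic (∑ i ∈ Hs, ∑ j ∈ Hs, A i j))
    (hfull_i : ChainIrreducible (fullKernel s0 A))
    (hfull_a : ChainAperiodic (fullKernel s0 A)) :
    Bornology.IsBounded (GammaBar s0 A) :=
  statement3_general s0 hs0 A hAsupp hAnn hfull_i
end

section
/- Suppose z ∈ ℂ∖{0} is such that the nonnegative matrix series N1(|z|), G1(|z|) and R1(|z|) converge entrywise. Then G1(z) = N1(z) · A_{*,−1}(z) and R1(z) = A_{*,1}(z) · N1(z). -/
/-!
A path of `𝓘_{D,n+1}` first reaches level `-1` at its last step, so it is a path of `𝓘_n`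
followed by a step `-1`; dually, a path of `𝓘_{U,n+1}` is a step `+1` followed by a path of
`𝓘_n`. Hence `D⁽ⁿ⁺¹⁾(z) = Q⁽ⁿ⁾(z) A_{*,-1}(z)` and `U⁽ⁿ⁺¹⁾(z) = A_{*,1}(z) Q⁽ⁿ⁾(z)`, while
`D⁽⁰⁾ = U⁽⁰⁾ = 0`. Summing over `n` is legitimate since `|Q⁽ⁿ⁾(z)| ≤ Q⁽ⁿ⁾(|z|)` entrywise, so
the series `N1(z)` converges absolutely, and multiplication by a fixed matrix is continuous.
-/

namespace QBDSeries

/-- The index set `H = {-1, 0, 1}`. -/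
def Hs : Finset ℤ := {-1, 0, 1}

/-- Partial sum of the first `k` entries of a sequence `σ : Fin n → ℤ`. -/
def psum {n : ℕ} (σ : Fin n → ℤ) (k : ℕ) : ℤ :=
  ∑ i ∈ Finset.univ.filter (fun i : Fin n => (i : ℕ) < k), σ i

/-- Condition defining the index set `𝓘_n`. -/
def condQ (n : ℕ) (σ : Fin n → ℤ) : Prop :=
  (∀ k : ℕ, 1 ≤ k → k ≤ n - 1 → 0 ≤ psum σ k) ∧ psum σ n = 0

/-- Condition defining the index set `𝓘_{D,n}`. -/
def condD (n : ℕ) (σ : Fin n → ℤ) : Prop :=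
  (∀ k : ℕ, 1 ≤ k → k ≤ n - 1 → 0 ≤ psum σ k) ∧ psum σ n = -1

/-- Condition defining the index set `𝓘_{U,n}`. -/
def condU (n : ℕ) (σ : Fin n → ℤ) : Prop :=
  (∀ k : ℕ, 1 ≤ k → k ≤ n - 1 → 1 ≤ psum σ k) ∧ psum σ n = 1

/-- `A_{*,i}(z) = Σ_{j∈H} A_{j,i} z^j` over `ℂ`. -/
noncomputable def AstarC (s0 : ℕ) (A : ℤ → ℤ → Matrix (Fin s0) (Fin s0) ℝ) (z : ℂ) (i : ℤ) :
    Matrix (Fin s0) (Fin s0) ℂ :=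
  ∑ j ∈ Hs, (z ^ j) • (A j i).map Complex.ofReal

/-- `A_{*,i}(z) = Σ_{j∈H} A_{j,i} z^j` over `ℝ`. -/
noncomputable def AstarR (s0 : ℕ) (A : ℤ → ℤ → Matrix (Fin s0) (Fin s0) ℝ) (z : ℝ) (i : ℤ) :
    Matrix (Fin s0) (Fin s0) ℝ :=
  ∑ j ∈ Hs, (z ^ j) • A j i

open Classical in
/-- `Σ_{σ ∈ cond} A_{*,σ1}(z)⋯A_{*,σn}(z)` over `ℂ`. -/
noncomputable def pathSumC (s0 : ℕ) (A : ℤ → ℤ → Matrix (Fin s0) (Fin s0) ℝ) (z : ℂ) (n : ℕ)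
    (cond : (Fin n → ℤ) → Prop) : Matrix (Fin s0) (Fin s0) ℂ :=
  ∑ σ : Fin n → {x : ℤ // x ∈ Hs},
    if cond (fun k => (σ k : ℤ)) then (List.ofFn fun k : Fin n => AstarC s0 A z (σ k : ℤ)).prod
    else 0

open Classical in
/-- `Σ_{σ ∈ cond} A_{*,σ1}(z)⋯A_{*,σn}(z)` over `ℝ`. -/
noncomputable def pathSumR (s0 : ℕ) (A : ℤ → ℤ → Matrix (Fin s0) (Fin s0) ℝ) (z : ℝ) (n : ℕ)
    (cond : (Fin n → ℤ) → Prop) : Matrix (Fin s0) (Fin s0) ℝ :=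
  ∑ σ : Fin n → {x : ℤ // x ∈ Hs},
    if cond (fun k => (σ k : ℤ)) then (List.ofFn fun k : Fin n => AstarR s0 A z (σ k : ℤ)).prod
    else 0

/-- `Q^{(n)}(z)` (complex); `Q^{(0)}(z) = I`. -/
noncomputable def QmatC (s0 : ℕ) (A : ℤ → ℤ → Matrix (Fin s0) (Fin s0) ℝ) (z : ℂ) (n : ℕ) :
    Matrix (Fin s0) (Fin s0) ℂ := pathSumC s0 A z n (condQ n)

/-- `D^{(n)}(z)` (complex); it vanishes for `n = 0`. -/
noncomputable def DmatC (s0 : ℕ) (A : ℤ → ℤ → Matrix (Fin s0) (Fin s0) ℝ) (z : ℂ) (n : ℕ) :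
    Matrix (Fin s0) (Fin s0) ℂ := pathSumC s0 A z n (condD n)

/-- `U^{(n)}(z)` (complex); it vanishes for `n = 0`. -/
noncomputable def UmatC (s0 : ℕ) (A : ℤ → ℤ → Matrix (Fin s0) (Fin s0) ℝ) (z : ℂ) (n : ℕ) :
    Matrix (Fin s0) (Fin s0) ℂ := pathSumC s0 A z n (condU n)

/-- `Q^{(n)}(z)` (real). -/
noncomputable def QmatR (s0 : ℕ) (A : ℤ → ℤ → Matrix (Fin s0) (Fin s0) ℝ) (z : ℝ) (n : ℕ) :
    Matrix (Fin s0) (Fin s0) ℝ := pathSumR s0 A z n (condQ n)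

/-- `D^{(n)}(z)` (real). -/
noncomputable def DmatR (s0 : ℕ) (A : ℤ → ℤ → Matrix (Fin s0) (Fin s0) ℝ) (z : ℝ) (n : ℕ) :
    Matrix (Fin s0) (Fin s0) ℝ := pathSumR s0 A z n (condD n)

/-- `U^{(n)}(z)` (real). -/
noncomputable def UmatR (s0 : ℕ) (A : ℤ → ℤ → Matrix (Fin s0) (Fin s0) ℝ) (z : ℝ) (n : ℕ) :
    Matrix (Fin s0) (Fin s0) ℝ := pathSumR s0 A z n (condU n)

/-- `N1(z) = Σ_{n≥0} Q^{(n)}(z)`, entrywise (complex). -/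
noncomputable def N1C (s0 : ℕ) (A : ℤ → ℤ → Matrix (Fin s0) (Fin s0) ℝ) (z : ℂ) :
    Matrix (Fin s0) (Fin s0) ℂ := Matrix.of fun i j => ∑' n : ℕ, QmatC s0 A z n i j

/-- `G1(z) = Σ_{n≥1} D^{(n)}(z)`, entrywise (complex). -/
noncomputable def G1C (s0 : ℕ) (A : ℤ → ℤ → Matrix (Fin s0) (Fin s0) ℝ) (z : ℂ) :
    Matrix (Fin s0) (Fin s0) ℂ := Matrix.of fun i j => ∑' n : ℕ, DmatC s0 A z n i j

/-- `R1(z) = Σ_{n≥1} U^{(n)}(z)`, entrywise (complex). -/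
noncomputable def R1C (s0 : ℕ) (A : ℤ → ℤ → Matrix (Fin s0) (Fin s0) ℝ) (z : ℂ) :
    Matrix (Fin s0) (Fin s0) ℂ := Matrix.of fun i j => ∑' n : ℕ, UmatC s0 A z n i j

/-- `N1(z)` (real). -/
noncomputable def N1R (s0 : ℕ) (A : ℤ → ℤ → Matrix (Fin s0) (Fin s0) ℝ) (z : ℝ) :
    Matrix (Fin s0) (Fin s0) ℝ := Matrix.of fun i j => ∑' n : ℕ, QmatR s0 A z n i j

/-- `G1(z)` (real). -/
noncomputable def G1R (s0 : ℕ) (A : ℤ → ℤ → Matrix (Fin s0) (Fin s0) ℝ) (z : ℝ) :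
    Matrix (Fin s0) (Fin s0) ℝ := Matrix.of fun i j => ∑' n : ℕ, DmatR s0 A z n i j

/-- `R1(z)` (real). -/
noncomputable def R1R (s0 : ℕ) (A : ℤ → ℤ → Matrix (Fin s0) (Fin s0) ℝ) (z : ℝ) :
    Matrix (Fin s0) (Fin s0) ℝ := Matrix.of fun i j => ∑' n : ℕ, UmatR s0 A z n i j

/-- `C(z,w) = Σ_{i,j∈H} A_{i,j} z^i w^j` over `ℂ`. -/
noncomputable def CmatC (s0 : ℕ) (A : ℤ → ℤ → Matrix (Fin s0) (Fin s0) ℝ) (z w : ℂ) :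
    Matrix (Fin s0) (Fin s0) ℂ :=
  ∑ i ∈ Hs, ∑ j ∈ Hs, (z ^ i * w ^ j) • (A i j).map Complex.ofReal

/-- `H1(z) = A_{*,0}(z) + A_{*,1}(z) N1(z) A_{*,-1}(z)` (complex). -/
noncomputable def H1C (s0 : ℕ) (A : ℤ → ℤ → Matrix (Fin s0) (Fin s0) ℝ) (z : ℂ) :
    Matrix (Fin s0) (Fin s0) ℂ :=
  AstarC s0 A z 0 + AstarC s0 A z 1 * N1C s0 A z * AstarC s0 A z (-1)

/-- A matrix with row sums one and nonnegative entries. -/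
def IsStochastic {n : ℕ} (M : Matrix (Fin n) (Fin n) ℝ) : Prop :=
  (∀ i j, 0 ≤ M i j) ∧ ∀ i, ∑ j, M i j = 1

end QBDSeries

section PathSums

variable {α R : Type*} [Fintype α] [Semiring R] (f : α → R)

open Classical in
lemma sum_ite_prod_ofFn_snoc {n : ℕ} (P : (Fin (n + 1) → α) → Prop)
    (Q : (Fin n → α) → Prop) (a₀ : α) (hP : ∀ σ a, P (Fin.snoc σ a) ↔ Q σ ∧ a = a₀) :
    (∑ σ : Fin (n + 1) → α, if P σ then (List.ofFn (f ∘ σ)).prod else 0) =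
      (∑ σ : Fin n → α, if Q σ then (List.ofFn (f ∘ σ)).prod else 0) * f a₀ := by
  rw [← (Fin.snocEquiv fun _ => α).sum_comp, Fintype.sum_prod_type_right, Finset.sum_mul]
  refine Finset.sum_congr rfl fun σ _ => ?_
  have hsnoc : ∀ a, (Fin.snocEquiv fun _ => α) (a, σ) = Fin.snoc σ a := fun _ => rfl
  simp only [hsnoc, hP, Fin.comp_snoc, List.ofFn_succ', List.prod_concat, Fin.snoc_castSucc,
    Fin.snoc_last]
  by_cases hQ : Q σ <;> simp [hQ, Function.comp_def]

open Classical in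
lemma sum_ite_prod_ofFn_cons {n : ℕ} (P : (Fin (n + 1) → α) → Prop)
    (Q : (Fin n → α) → Prop) (a₀ : α) (hP : ∀ a σ, P (Fin.cons a σ) ↔ Q σ ∧ a = a₀) :
    (∑ σ : Fin (n + 1) → α, if P σ then (List.ofFn (f ∘ σ)).prod else 0) =
      f a₀ * ∑ σ : Fin n → α, if Q σ then (List.ofFn (f ∘ σ)).prod else 0 := by
  rw [← (Fin.consEquiv fun _ => α).sum_comp, Fintype.sum_prod_type, Finset.mul_sum,
    Finset.sum_comm]
  refine Finset.sum_congr rfl fun σ _ => ?_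
  have hcons : ∀ a, (Fin.consEquiv fun _ => α) (a, σ) = Fin.cons a σ := fun _ => rfl
  simp only [hcons, hP, Fin.comp_cons, List.ofFn_succ, List.prod_cons, Fin.cons_zero,
    Fin.cons_succ]
  by_cases hQ : Q σ <;> simp [hQ, Function.comp_def]

end PathSums

lemma norm_prod_ofFn_apply_le {ι R : Type*} [Fintype ι] [DecidableEq ι] [NormedRing R]
    [NormOneClass R] {n : ℕ} (f : Fin n → Matrix ι ι R) (g : Fin n → Matrix ι ι ℝ)
    (h : ∀ m i j, ‖f m i j‖ ≤ g m i j) (i j : ι) :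
    ‖(List.ofFn f).prod i j‖ ≤ (List.ofFn g).prod i j := by
  induction n generalizing i with
  | zero =>
    rcases eq_or_ne i j with rfl | hij <;> simp [*]
  | succ n ih =>
    simp only [List.ofFn_succ, List.prod_cons, Matrix.mul_apply]
    refine (norm_sum_le _ _).trans (Finset.sum_le_sum fun k _ => ?_)
    exact (norm_mul_le _ _).trans (mul_le_mul (h 0 i k) (ih _ _ (fun m => h m.succ) k)
      (norm_nonneg _) ((norm_nonneg _).trans (h 0 i k)))

lemma Matrix.of_tsum_apply_eq {ι κ R : Type*} [AddCommMonoid R] [TopologicalSpace R] [T2Space R]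
    {f : ℕ → Matrix ι κ R} {a : Matrix ι κ R} (h : HasSum f a) :
    Matrix.of (fun i j => ∑' n, f n i j) = a := by
  ext i j
  exact (Pi.hasSum.1 (Pi.hasSum.1 h i) j).tsum_eq

lemma hasSum_of_zero_of_succ_eq_map {M N : Type*} [AddCommMonoid M] [TopologicalSpace M]
    [AddCommMonoid N] [TopologicalSpace N] [ContinuousAdd N] {f : ℕ → N} {g : ℕ → M} {b : M}
    (φ : M →+ N) (hφ : Continuous φ) (hg : HasSum g b) (h0 : f 0 = 0)
    (hsucc : ∀ n, f (n + 1) = φ (g n)) : HasSum f (φ b) := by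
  have hshift : HasSum (fun n => f (n + 1)) (φ b) := by
    simpa only [hsucc, Function.comp_def] using hg.map φ hφ
  simpa only [h0, zero_add] using hshift.zero_add

namespace QBDSeries

section PartialSums

variable {n : ℕ}

lemma psum_eq_sum_ite (σ : Fin n → ℤ) (k : ℕ) :
    psum σ k = ∑ i : Fin n, if (i : ℕ) < k then σ i else 0 :=
  Finset.sum_filter _ _

lemma psum_zero (σ : Fin n → ℤ) : psum σ 0 = 0 := by
  simp [psum_eq_sum_ite]

lemma psum_snoc_of_le (σ : Fin n → ℤ) (a : ℤ) {k : ℕ} (hk : k ≤ n) :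
    psum (Fin.snoc σ a : Fin (n + 1) → ℤ) k = psum σ k := by
  simp [psum_eq_sum_ite, Fin.sum_univ_castSucc, Nat.not_lt.mpr hk]

lemma psum_snoc_succ (σ : Fin n → ℤ) (a : ℤ) :
    psum (Fin.snoc σ a : Fin (n + 1) → ℤ) (n + 1) = psum σ n + a := by
  simp [psum_eq_sum_ite, Fin.sum_univ_castSucc]

lemma psum_cons_succ (a : ℤ) (σ : Fin n → ℤ) (k : ℕ) :
    psum (Fin.cons a σ : Fin (n + 1) → ℤ) (k + 1) = a + psum σ k := by
  simp [psum_eq_sum_ite, Fin.sum_univ_succ]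

lemma condD_snoc_iff (σ : Fin n → ℤ) {a : ℤ} (ha : -1 ≤ a) :
    condD (n + 1) (Fin.snoc σ a) ↔ condQ n σ ∧ a = -1 := by
  have hnonneg : (∀ k, 1 ≤ k → k ≤ n → 0 ≤ psum σ k) ↔
      (∀ k, 1 ≤ k → k ≤ n - 1 → 0 ≤ psum σ k) ∧ 0 ≤ psum σ n := by
    refine ⟨fun h => ⟨fun k hk1 hk2 => h k hk1 (by omega), ?_⟩, fun h k hk1 hk2 => ?_⟩
    · rcases Nat.eq_zero_or_pos n with rfl | hn
      · exact (psum_zero σ).ge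
      · exact h n hn le_rfl
    · rcases Nat.lt_or_ge k n with hkn | hkn
      · exact h.1 k hk1 (by omega)
      · exact (le_antisymm hk2 hkn) ▸ h.2
  simp +contextual only [condD, condQ, Nat.add_sub_cancel, psum_snoc_succ, psum_snoc_of_le,
    hnonneg]
  constructor
  · rintro ⟨⟨hQ, hn⟩, hsum⟩
    exact ⟨⟨hQ, by omega⟩, by omega⟩
  · rintro ⟨⟨hQ, hn⟩, rfl⟩
    exact ⟨⟨hQ, hn.ge⟩, by omega⟩

lemma condU_cons_iff {a : ℤ} (ha : a ≤ 1) (σ : Fin n → ℤ) :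
    condU (n + 1) (Fin.cons a σ) ↔ condQ n σ ∧ a = 1 := by
  simp only [condU, condQ, Nat.add_sub_cancel, psum_cons_succ]
  constructor
  · rintro ⟨h, hsum⟩
    have ha1 : a = 1 := by
      rcases Nat.eq_zero_or_pos n with rfl | hn
      · rw [psum_zero] at hsum
        omega
      · have := h 1 le_rfl hn
        rw [psum_cons_succ a σ 0, psum_zero] at this
        omega
    subst ha1
    refine ⟨⟨fun k hk1 hk2 => ?_, by omega⟩, rfl⟩
    have := h (k + 1) (by omega) (by omega)
    rw [psum_cons_succ] at this
    omega
  · rintro ⟨⟨h, hsum⟩, rfl⟩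
    refine ⟨fun k hk1 hk2 => ?_, by omega⟩
    obtain ⟨j, rfl⟩ : ∃ j, k = j + 1 := ⟨k - 1, by omega⟩
    rw [psum_cons_succ]
    rcases Nat.eq_zero_or_pos j with rfl | hj
    · simp [psum_zero]
    · have := h j hj (by omega)
      omega

end PartialSums

section Complex

variable {s0 : ℕ} {A : ℤ → ℤ → Matrix (Fin s0) (Fin s0) ℝ} {z : ℂ}

lemma pathSumC_eq_zero {n : ℕ} {cond : (Fin n → ℤ) → Prop} (h : ∀ σ, ¬cond σ) :
    pathSumC s0 A z n cond = 0 :=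
  Finset.sum_eq_zero fun _ _ => if_neg (h _)

lemma DmatC_zero : DmatC s0 A z 0 = 0 :=
  pathSumC_eq_zero fun _ h => by simp [condD, psum_zero] at h

lemma UmatC_zero : UmatC s0 A z 0 = 0 :=
  pathSumC_eq_zero fun _ h => by simp [condU, psum_zero] at h

lemma DmatC_succ (n : ℕ) : DmatC s0 A z (n + 1) = QmatC s0 A z n * AstarC s0 A z (-1) :=
  sum_ite_prod_ofFn_snoc (fun a : Hs => AstarC s0 A z a) _ _ ⟨-1, by decide⟩ fun σ a => by
    change condD (n + 1) (Subtype.val ∘ Fin.snoc σ a) ↔ _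
    rw [Fin.comp_snoc, condD_snoc_iff _ (by fin_cases a <;> decide), Subtype.ext_iff]
    rfl

lemma UmatC_succ (n : ℕ) : UmatC s0 A z (n + 1) = AstarC s0 A z 1 * QmatC s0 A z n :=
  sum_ite_prod_ofFn_cons (fun a : Hs => AstarC s0 A z a) _ _ ⟨1, by decide⟩ fun a σ => by
    change condU (n + 1) (Subtype.val ∘ Fin.cons a σ) ↔ _
    rw [Fin.comp_cons, condU_cons_iff (by fin_cases a <;> decide), Subtype.ext_iff]
    rfl

lemma norm_AstarC_apply_le (hAnn : ∀ i j : ℤ, ∀ k l, 0 ≤ A i j k l) (i : ℤ) (k l : Fin s0) :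
    ‖AstarC s0 A z i k l‖ ≤ AstarR s0 A ‖z‖ i k l := by
  simp only [AstarC, AstarR, Matrix.sum_apply, Matrix.smul_apply, Matrix.map_apply, smul_eq_mul]
  refine (norm_sum_le _ _).trans (Finset.sum_le_sum fun j _ => ?_)
  rw [norm_mul, norm_zpow, Complex.norm_real, Real.norm_of_nonneg (hAnn j i k l)]

open Classical in
lemma norm_pathSumC_apply_le (hAnn : ∀ i j : ℤ, ∀ k l, 0 ≤ A i j k l) (n : ℕ)
    (cond : (Fin n → ℤ) → Prop) (k l : Fin s0) :
    ‖pathSumC s0 A z n cond k l‖ ≤ pathSumR s0 A ‖z‖ n cond k l := by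
  simp only [pathSumC, pathSumR, Matrix.sum_apply]
  refine (norm_sum_le _ _).trans (Finset.sum_le_sum fun σ _ => ?_)
  split_ifs
  · exact norm_prod_ofFn_apply_le _ _ (fun _ => norm_AstarC_apply_le hAnn _) k l
  · simp

lemma hasSum_QmatC (hAnn : ∀ i j : ℤ, ∀ k l, 0 ≤ A i j k l)
    (hN : ∀ i j, Summable fun n : ℕ => QmatR s0 A ‖z‖ n i j) :
    HasSum (QmatC s0 A z) (N1C s0 A z) := by
  have hQ : Summable (QmatC s0 A z) := Pi.summable.2 fun k => Pi.summable.2 fun l =>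
    (hN k l).of_norm_bounded fun n => norm_pathSumC_apply_le hAnn n _ k l
  convert hQ.hasSum
  exact Matrix.of_tsum_apply_eq hQ.hasSum

end Complex

end QBDSeries

open QBDSeries in
theorem statement7_general
    (s0 : ℕ)
    (A : ℤ → ℤ → Matrix (Fin s0) (Fin s0) ℝ)
    (hAnn : ∀ i j : ℤ, ∀ k l, 0 ≤ A i j k l)
    (z : ℂ)
    (hN : ∀ i j, Summable fun n : ℕ => QmatR s0 A ‖z‖ n i j) :
    G1C s0 A z = N1C s0 A z * AstarC s0 A z (-1) ∧
    R1C s0 A z = AstarC s0 A z 1 * N1C s0 A z := by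
  have hQ := hasSum_QmatC hAnn hN
  exact ⟨Matrix.of_tsum_apply_eq <| hasSum_of_zero_of_succ_eq_map (AddMonoidHom.mulRight _)
      (continuous_mul_const _) hQ DmatC_zero DmatC_succ,
    Matrix.of_tsum_apply_eq <| hasSum_of_zero_of_succ_eq_map (AddMonoidHom.mulLeft _)
      (continuous_const_mul _) hQ UmatC_zero UmatC_succ⟩

open QBDSeries in
/-- `G1(z) = N1(z) A_{*,-1}(z)` and `R1(z) = A_{*,1}(z) N1(z)`. -/
theorem statement7
    (s0 : ℕ) (hs0 : 1 ≤ s0)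
    (A : ℤ → ℤ → Matrix (Fin s0) (Fin s0) ℝ)
    (hAsupp : ∀ i j : ℤ, ¬(i ∈ Hs ∧ j ∈ Hs) → A i j = 0)
    (hAnn : ∀ i j : ℤ, ∀ k l, 0 ≤ A i j k l)
    (hAst : IsStochastic (∑ i ∈ Hs, ∑ j ∈ Hs, A i j))
    (z : ℂ) (hz : z ≠ 0)
    (hN : ∀ i j, Summable fun n : ℕ => QmatR s0 A ‖z‖ n i j)
    (hG : ∀ i j, Summable fun n : ℕ => DmatR s0 A ‖z‖ n i j)
    (hR : ∀ i j, Summable fun n : ℕ => UmatR s0 A ‖z‖ n i j) :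
    G1C s0 A z = N1C s0 A z * AstarC s0 A z (-1) ∧
    R1C s0 A z = AstarC s0 A z 1 * N1C s0 A z :=
  statement7_general s0 A hAnn z hN
end
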